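/- Let μ_1,…,μ_k be probability measures on ℝ with finite second moments and let π_1,…,π_k > 0 with Σ_{s=1}^k π_s = 1. Define ν̄ as the pushforward of Unif(0,1) under u ↦ Σ_{s=1}^k π_s F_{μ_s}⁻¹(u). Then for every probability measure ν on ℝ with finite second moment, Σ_{s=1}^k π_s W₂²(μ_s, ν̄) ≤ Σ_{s=1}^k π_s W₂²(μ_s, ν); that is, ν̄ is a 2-Wasserstein barycenter of μ_1,…,μ_k with weights (π_s). (The quantile-average construction of the barycenter used in Section 4.) -/

import Mathlib

/-! By inverse transform sampling each `μ` is the law of its quantile function `F_μ⁻¹` under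
`Unif(0,1)`, and the comonotone coupling `u ↦ (F_μ⁻¹ u, F_ν⁻¹ u)` is optimal, so
`W₂²(μ, ν) = ∫₀¹ (F_μ⁻¹ - F_ν⁻¹)²`. Optimality: `(x - y)²` is the planar measure of
`Ι x y ×ˢ Ι x y`, so by Tonelli the cost of a coupling `γ` is `∫∫ γ {z | s, t ∈ Ι z.1 z.2} ds dt`.
By inclusion–exclusion the integrand is a term depending only on the marginals minus
`γ {z.1 < s, z.2 < t} + γ {z.1 < t, z.2 < s}`, and these are at most the Fréchet bounds
`min (F_μ(s⁻), F_ν(t⁻))`, which the comonotone coupling attains.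

Coupling `ν̄` with `μ_s` through `Unif(0,1)` costs at most `∫ (F_{μ_s}⁻¹ - q̄)²` with
`q̄ = Σ π_j F_{μ_j}⁻¹`, and integrating `Σ π_s (a_s - t)² = Σ π_s (a_s - ā)² + (ā - t)²` over `u`
with `a_s = F_{μ_s}⁻¹ u`, `t = F_ν⁻¹ u` compares this with `Σ π_s W₂²(μ_s, ν)`. -/

open MeasureTheory ProbabilityTheory

/-- Squared 2-Wasserstein distance between measures on ℝ: infimum of ∫|x−y|² dγ over
couplings γ of P and Q. -/
noncomputable def W2sq (P Q : Measure ℝ) : ℝ :=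
  sInf { c : ℝ | ∃ γ : Measure (ℝ × ℝ),
    γ.map Prod.fst = P ∧ γ.map Prod.snd = Q ∧ c = ∫ z, (z.1 - z.2) ^ 2 ∂γ }

/-- CDF of a measure on ℝ. -/
noncomputable def cdf' (μ : Measure ℝ) (x : ℝ) : ℝ := (μ (Set.Iic x)).toReal

/-- Quantile function of a measure on ℝ: `F_μ⁻¹(u) = inf {x : F_μ(x) ≥ u}`. -/
noncomputable def quantile' (μ : Measure ℝ) (u : ℝ) : ℝ := sInf { x : ℝ | u ≤ cdf' μ x }

/-- Uniform distribution on (0,1): Lebesgue measure restricted to (0,1). -/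
noncomputable def unif01 : Measure ℝ := volume.restrict (Set.Ioo 0 1)

open Set
open scoped ENNReal Interval

instance : IsProbabilityMeasure unif01 :=
  ⟨by simp [unif01, Real.volume_Ioo]⟩

lemma unif01_eq_restrict_Ioc : unif01 = volume.restrict (Ioc 0 1) :=
  Measure.restrict_congr_set Ioo_ae_eq_Ioc

lemma MonotoneOn.aemeasurable_unif01 {f : ℝ → ℝ} (hf : MonotoneOn f (Ioo 0 1)) :
    AEMeasurable f unif01 :=
  aemeasurable_restrict_of_monotoneOn measurableSet_Ioo hf

section quantile

variable (μ : Measure ℝ) [IsProbabilityMeasure μ]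

lemma cdf'_eq_cdf : cdf' μ = cdf μ :=
  funext fun x => (cdf_eq_real μ x).symm

lemma nonempty_setOf_le_cdf' {u : ℝ} (hu : u < 1) : {x | u ≤ cdf' μ x}.Nonempty := by
  obtain ⟨x, hx⟩ := ((tendsto_cdf_atTop μ).eventually_const_lt hu).exists
  exact ⟨x, by rw [cdf'_eq_cdf]; exact hx.le⟩

lemma bddBelow_setOf_le_cdf' {u : ℝ} (hu : 0 < u) : BddBelow {x | u ≤ cdf' μ x} := by
  obtain ⟨x, hx⟩ := ((tendsto_cdf_atBot μ).eventually_lt_const hu).exists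
  refine ⟨x, fun y (hy : u ≤ cdf' μ y) => le_of_not_gt fun hyx => ?_⟩
  rw [cdf'_eq_cdf] at hy
  exact (hy.trans (monotone_cdf μ hyx.le)).not_gt hx

lemma quantile'_le_iff {u : ℝ} (hu : u ∈ Ioo 0 1) (x : ℝ) :
    quantile' μ u ≤ x ↔ u ≤ cdf' μ x := by
  refine ⟨fun h => ?_, fun h => csInf_le (bddBelow_setOf_le_cdf' μ hu.1) h⟩
  have hright : ∀ y > x, u ≤ cdf μ y := fun y hy => by
    obtain ⟨z, hz : u ≤ cdf' μ z, hzy⟩ := (csInf_lt_iff (bddBelow_setOf_le_cdf' μ hu.1)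
      (nonempty_setOf_le_cdf' μ hu.2)).1 (h.trans_lt hy)
    rw [cdf'_eq_cdf] at hz
    exact hz.trans (monotone_cdf μ hzy.le)
  rw [cdf'_eq_cdf]
  exact ge_of_tendsto (((cdf μ).right_continuous x).mono Ioi_subset_Ici_self)
    (eventually_nhdsWithin_of_forall hright)

lemma monotoneOn_quantile' : MonotoneOn (quantile' μ) (Ioo 0 1) :=
  fun _ hu _ hv huv => csInf_le_csInf (bddBelow_setOf_le_cdf' μ hu.1)
    (nonempty_setOf_le_cdf' μ hv.2) fun _ hx => huv.trans hx

lemma map_quantile'_unif01 : unif01.map (quantile' μ) = μ := by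
  have hq := (monotoneOn_quantile' μ).aemeasurable_unif01
  have := Measure.isProbabilityMeasure_map hq
  refine Measure.ext_of_Iic _ _ fun x => ?_
  have hpre : quantile' μ ⁻¹' Iic x ∩ Ioo 0 1 = Iic (cdf μ x) ∩ Ioo 0 1 := by
    ext u
    simp only [mem_inter_iff, mem_preimage, mem_Iic, and_congr_left_iff]
    exact fun hu => by rw [quantile'_le_iff μ hu, cdf'_eq_cdf]
  rw [Measure.map_apply_of_aemeasurable hq measurableSet_Iic, unif01,
    Measure.restrict_apply' measurableSet_Ioo, hpre, ← Measure.restrict_apply' measurableSet_Ioo,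
    ← unif01, unif01_eq_restrict_Ioc, Measure.restrict_apply' measurableSet_Ioc, inter_comm,
    Ioc_inter_Iic, min_eq_right (cdf_le_one μ x), Real.volume_Ioc, sub_zero, ofReal_cdf]

lemma memLp_quantile' {p : ℝ≥0∞} (hμ : MemLp id p μ) : MemLp (quantile' μ) p unif01 :=
  (memLp_map_measure_iff aestronglyMeasurable_id
    (monotoneOn_quantile' μ).aemeasurable_unif01).1 (by rwa [map_quantile'_unif01])

end quantile

section coupling

variable (γ : Measure (ℝ × ℝ))

lemma lintegral_sq_sub_eq_lintegral_measure_uIoc [SFinite γ] :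
    ∫⁻ z, ENNReal.ofReal ((z.1 - z.2) ^ 2) ∂γ
      = ∫⁻ p : ℝ × ℝ, γ {z | p.1 ∈ Ι z.1 z.2 ∧ p.2 ∈ Ι z.1 z.2} := by
  have hE : MeasurableSet
      {w : (ℝ × ℝ) × ℝ × ℝ | w.2.1 ∈ Ι w.1.1 w.1.2 ∧ w.2.2 ∈ Ι w.1.1 w.1.2} := by
    simp only [uIoc, mem_Ioc]
    measurability
  have hsq (z : ℝ × ℝ) :
      ENNReal.ofReal ((z.1 - z.2) ^ 2) = volume (Ι z.1 z.2 ×ˢ Ι z.1 z.2) := by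
    rw [Measure.volume_eq_prod, Measure.prod_prod, Real.volume_uIoc, ← ENNReal.ofReal_mul
      (abs_nonneg _), abs_mul_abs_self, ← sq, ← neg_sub, neg_sq]
  simp_rw [hsq]
  exact (Measure.prod_apply hE).symm.trans (Measure.prod_apply_symm hE)

lemma measure_uIoc_add_cross (s t : ℝ) :
    γ {z | s ∈ Ι z.1 z.2 ∧ t ∈ Ι z.1 z.2}
        + (γ {z | z.1 < s ∧ z.2 < t} + γ {z | z.1 < t ∧ z.2 < s})
      = γ.fst (Iio (min s t)) + γ.snd (Iio (min s t)) := by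
  have hS : MeasurableSet {z : ℝ × ℝ | s ∈ Ι z.1 z.2 ∧ t ∈ Ι z.1 z.2} := by
    simp only [uIoc, mem_Ioc]; measurability
  have hA (a b : ℝ) : MeasurableSet {z : ℝ × ℝ | z.1 < a ∧ z.2 < b} := by measurability
  rw [Measure.fst_apply measurableSet_Iio, Measure.snd_apply measurableSet_Iio,
    ← lintegral_indicator_one hS, ← lintegral_indicator_one (hA s t),
    ← lintegral_indicator_one (hA t s),
    ← lintegral_indicator_one (measurable_fst measurableSet_Iio),
    ← lintegral_indicator_one (measurable_snd measurableSet_Iio),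
    ← lintegral_add_left (measurable_one.indicator (hA s t)),
    ← lintegral_add_left (measurable_one.indicator hS),
    ← lintegral_add_left (measurable_one.indicator (measurable_fst measurableSet_Iio))]
  refine lintegral_congr fun z => ?_
  -- `s ∈ Ι x y` iff exactly one of `x < s`, `y < s` holds.
  simp only [indicator_apply, mem_ofPred_eq, mem_uIoc, Pi.one_apply]
  rcases lt_or_ge z.1 s with h1 | h1 <;> rcases lt_or_ge z.2 s with h2 | h2 <;>
    rcases lt_or_ge z.1 t with h3 | h3 <;> rcases lt_or_ge z.2 t with h4 | h4 <;>
    simp [h1, h2, h3, h4, not_lt.2, not_le.2] <;> linarith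

lemma measure_fst_lt_snd_lt_le_min (s t : ℝ) :
    γ {z | z.1 < s ∧ z.2 < t} ≤ min (γ.fst (Iio s)) (γ.snd (Iio t)) := by
  rw [Measure.fst_apply measurableSet_Iio, Measure.snd_apply measurableSet_Iio]
  exact le_min (measure_mono fun _ hz => hz.1) (measure_mono fun _ hz => hz.2)

lemma lintegral_sq_sub_le_of_measure_fst_lt_snd_lt_eq_min [SFinite γ] {γ₀ : Measure (ℝ × ℝ)}
    [IsFiniteMeasure γ₀] (hfst : γ₀.fst = γ.fst) (hsnd : γ₀.snd = γ.snd)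
    (hγ₀ : ∀ s t, γ₀ {z | z.1 < s ∧ z.2 < t} = min (γ₀.fst (Iio s)) (γ₀.snd (Iio t))) :
    ∫⁻ z, ENNReal.ofReal ((z.1 - z.2) ^ 2) ∂γ₀ ≤ ∫⁻ z, ENNReal.ofReal ((z.1 - z.2) ^ 2) ∂γ := by
  rw [lintegral_sq_sub_eq_lintegral_measure_uIoc, lintegral_sq_sub_eq_lintegral_measure_uIoc]
  refine lintegral_mono fun p => ?_
  have hcross (a b : ℝ) : γ {z | z.1 < a ∧ z.2 < b} ≤ γ₀ {z | z.1 < a ∧ z.2 < b} := by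
    rw [hγ₀, hfst, hsnd]
    exact measure_fst_lt_snd_lt_le_min γ a b
  have h₀ := measure_uIoc_add_cross γ₀ p.1 p.2
  rw [hfst, hsnd, ← measure_uIoc_add_cross γ] at h₀
  refine (ENNReal.add_le_add_iff_right (by finiteness)).1 (h₀.trans_le ?_)
  gcongr _ + (?_ + ?_) <;> exact hcross _ _

end coupling

lemma subset_or_subset_of_monotoneOn {α β : Type*} [LinearOrder α] [LinearOrder β] {I : Set α}
    {f g : α → β} (hf : MonotoneOn f I) (hg : MonotoneOn g I) (s t : β) :
    f ⁻¹' Iio s ∩ I ⊆ g ⁻¹' Iio t ∩ I ∨ g ⁻¹' Iio t ∩ I ⊆ f ⁻¹' Iio s ∩ I := by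
  refine or_iff_not_imp_left.2 fun hnot => ?_
  obtain ⟨a, ⟨hfa, haI⟩, hna⟩ := not_subset.1 hnot
  have hga : t ≤ g a := le_of_not_gt fun h => hna ⟨h, haI⟩
  rintro b ⟨hgb, hbI⟩
  have hba : b ≤ a := le_of_not_ge fun hab => (hg haI hbI hab).not_gt (hgb.trans_le hga)
  exact ⟨(hf hbI haI hba).trans_lt hfa, hbI⟩

lemma measure_inter_eq_min_of_subset_or_subset {α : Type*} [MeasurableSpace α] (μ : Measure α)
    {A B : Set α} (h : A ⊆ B ∨ B ⊆ A) : μ (A ∩ B) = min (μ A) (μ B) := by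
  rcases h with h | h
  · rw [inter_eq_left.2 h, min_eq_left (measure_mono h)]
  · rw [inter_eq_right.2 h, min_eq_right (measure_mono h)]

lemma map_prodMk_fst_lt_snd_lt_eq_min {α : Type*} [MeasurableSpace α] [LinearOrder α]
    (m : Measure α) {I : Set α} (hI : MeasurableSet I) {f g : α → ℝ} (hf : MonotoneOn f I)
    (hg : MonotoneOn g I) (hfm : AEMeasurable f (m.restrict I))
    (hgm : AEMeasurable g (m.restrict I)) (s t : ℝ) :
    (m.restrict I).map (fun u => (f u, g u)) {z | z.1 < s ∧ z.2 < t}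
      = min (((m.restrict I).map fun u => (f u, g u)).fst (Iio s))
          (((m.restrict I).map fun u => (f u, g u)).snd (Iio t)) := by
  have hz : MeasurableSet {z : ℝ × ℝ | z.1 < s ∧ z.2 < t} := by measurability
  rw [Measure.fst_map_prodMk₀ hgm, Measure.snd_map_prodMk₀ hfm,
    Measure.map_apply_of_aemeasurable (hfm.prodMk hgm) hz,
    Measure.map_apply_of_aemeasurable hfm measurableSet_Iio,
    Measure.map_apply_of_aemeasurable hgm measurableSet_Iio, Measure.restrict_apply' hI,
    Measure.restrict_apply' hI, Measure.restrict_apply' hI]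
  exact (congrArg m (inter_inter_distrib_right _ _ _)).trans
    (measure_inter_eq_min_of_subset_or_subset m (subset_or_subset_of_monotoneOn hf hg s t))

lemma W2sq_le_integral {P Q : Measure ℝ} {γ : Measure (ℝ × ℝ)} (hP : γ.fst = P)
    (hQ : γ.snd = Q) : W2sq P Q ≤ ∫ z, (z.1 - z.2) ^ 2 ∂γ :=
  csInf_le ⟨0, by rintro _ ⟨γ, -, -, rfl⟩; exact integral_nonneg fun _ => sq_nonneg _⟩
    ⟨γ, hP, hQ, rfl⟩

lemma W2sq_eq_integral_of_forall_le {P Q : Measure ℝ} {γ : Measure (ℝ × ℝ)} (hP : γ.fst = P)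
    (hQ : γ.snd = Q) (hmin : ∀ γ' : Measure (ℝ × ℝ), γ'.fst = P → γ'.snd = Q →
      ∫ z, (z.1 - z.2) ^ 2 ∂γ ≤ ∫ z, (z.1 - z.2) ^ 2 ∂γ') :
    W2sq P Q = ∫ z, (z.1 - z.2) ^ 2 ∂γ :=
  le_antisymm (W2sq_le_integral hP hQ)
    (le_csInf ⟨_, γ, hP, hQ, rfl⟩ (by rintro _ ⟨γ', hP', hQ', rfl⟩; exact hmin γ' hP' hQ'))

lemma integrable_sq_sub_of_memLp {γ : Measure (ℝ × ℝ)} (hP : MemLp id 2 γ.fst)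
    (hQ : MemLp id 2 γ.snd) : Integrable (fun z : ℝ × ℝ => (z.1 - z.2) ^ 2) γ :=
  (((memLp_map_measure_iff aestronglyMeasurable_id measurable_fst.aemeasurable).1 hP).sub
    ((memLp_map_measure_iff aestronglyMeasurable_id measurable_snd.aemeasurable).1 hQ)
    ).integrable_sq

lemma W2sq_map_le_integral {α : Type*} [MeasurableSpace α] (m : Measure α) {f g : α → ℝ}
    (hf : AEMeasurable f m) (hg : AEMeasurable g m) :
    W2sq (m.map f) (m.map g) ≤ ∫ x, (f x - g x) ^ 2 ∂m :=
  (W2sq_le_integral (Measure.fst_map_prodMk₀ hg) (Measure.snd_map_prodMk₀ hf)).trans_eq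
    (integral_map (hf.prodMk hg) (by fun_prop))

lemma W2sq_map_eq_integral_of_monotoneOn {f g : ℝ → ℝ} (hf : MonotoneOn f (Ioo 0 1))
    (hg : MonotoneOn g (Ioo 0 1)) (hf2 : MemLp id 2 (unif01.map f))
    (hg2 : MemLp id 2 (unif01.map g)) :
    W2sq (unif01.map f) (unif01.map g) = ∫ u, (f u - g u) ^ 2 ∂unif01 := by
  have hfm := hf.aemeasurable_unif01
  have hgm := hg.aemeasurable_unif01
  have hfst : (unif01.map fun u => (f u, g u)).fst = unif01.map f := Measure.fst_map_prodMk₀ hgm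
  have hsnd : (unif01.map fun u => (f u, g u)).snd = unif01.map g := Measure.snd_map_prodMk₀ hfm
  rw [← integral_map (hfm.prodMk hgm) (f := fun z : ℝ × ℝ => (z.1 - z.2) ^ 2) (by fun_prop)]
  refine W2sq_eq_integral_of_forall_le hfst hsnd fun γ hP hQ => ?_
  have : IsFiniteMeasure γ := ⟨by rw [← Measure.fst_univ, hP]; exact measure_lt_top _ _⟩
  have hint := integrable_sq_sub_of_memLp (hP ▸ hf2) (hQ ▸ hg2)
  have hnonneg (ρ : Measure (ℝ × ℝ)) : 0 ≤ᵐ[ρ] fun z : ℝ × ℝ => (z.1 - z.2) ^ 2 :=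
    ae_of_all _ fun _ => sq_nonneg _
  rw [integral_eq_lintegral_of_nonneg_ae (hnonneg _) (by fun_prop),
    integral_eq_lintegral_of_nonneg_ae (hnonneg _) (by fun_prop)]
  refine ENNReal.toReal_mono hint.lintegral_lt_top.ne
    (lintegral_sq_sub_le_of_measure_fst_lt_snd_lt_eq_min γ (hfst.trans hP.symm)
      (hsnd.trans hQ.symm) fun s t => ?_)
  exact map_prodMk_fst_lt_snd_lt_eq_min volume measurableSet_Ioo hf hg hfm hgm s t

lemma W2sq_eq_integral_sq_sub_quantile' (μ ν : Measure ℝ) [IsProbabilityMeasure μ]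
    [IsProbabilityMeasure ν] (hμ : MemLp id 2 μ) (hν : MemLp id 2 ν) :
    W2sq μ ν = ∫ u, (quantile' μ u - quantile' ν u) ^ 2 ∂unif01 := by
  have h := W2sq_map_eq_integral_of_monotoneOn (monotoneOn_quantile' μ) (monotoneOn_quantile' ν)
    (by rwa [map_quantile'_unif01]) (by rwa [map_quantile'_unif01])
  rwa [map_quantile'_unif01, map_quantile'_unif01] at h

lemma sum_mul_sq_sub_eq {ι : Type*} [Fintype ι] (w : ι → ℝ) (hw : ∑ i, w i = 1) (a : ι → ℝ)
    (t : ℝ) :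
    ∑ i, w i * (a i - t) ^ 2
      = ∑ i, w i * (a i - ∑ j, w j * a j) ^ 2 + (∑ j, w j * a j - t) ^ 2 := by
  set m := ∑ j, w j * a j
  set c := (m - t) ^ 2 - 2 * (m - t) * m
  calc ∑ i, w i * (a i - t) ^ 2
      = ∑ i, (w i * (a i - m) ^ 2 + 2 * (m - t) * (w i * a i) + c * w i) :=
        Finset.sum_congr rfl fun i _ => by ring
    _ = ∑ i, w i * (a i - m) ^ 2 + 2 * (m - t) * m + c * 1 := by
        rw [Finset.sum_add_distrib, Finset.sum_add_distrib, ← Finset.mul_sum, ← Finset.mul_sum, hw]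
    _ = _ := by ring

lemma sum_mul_integral_sq_sub_weightedMean_le {ι α : Type*} [Fintype ι] [MeasurableSpace α]
    {m : Measure α} (w : ι → ℝ) (hw : ∑ i, w i = 1) {f : ι → α → ℝ} (hf : ∀ i, MemLp (f i) 2 m)
    {g : α → ℝ} (hg : MemLp g 2 m) :
    ∑ i, w i * ∫ x, (f i x - ∑ j, w j * f j x) ^ 2 ∂m ≤ ∑ i, w i * ∫ x, (f i x - g x) ^ 2 ∂m := by
  have hmean : MemLp (fun x => ∑ j, w j * f j x) 2 m :=
    memLp_finsetSum _ fun j _ => (hf j).const_mul (w j)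
  have hint (h : α → ℝ) (hh : MemLp h 2 m) (i : ι) :
      Integrable (fun x => w i * (f i x - h x) ^ 2) m :=
    ((hf i).sub hh).integrable_sq.const_mul (w i)
  have hsum (h : α → ℝ) (hh : MemLp h 2 m) :
      ∑ i, w i * ∫ x, (f i x - h x) ^ 2 ∂m = ∫ x, ∑ i, w i * (f i x - h x) ^ 2 ∂m := by
    rw [integral_finsetSum _ fun i _ => hint h hh i]
    simp only [integral_const_mul]
  rw [hsum _ hmean, hsum g hg]
  refine integral_mono (integrable_finsetSum _ fun i _ => hint _ hmean i)
    (integrable_finsetSum _ fun i _ => hint g hg i) fun x => ?_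
  rw [sum_mul_sq_sub_eq w hw (fun i => f i x) (g x)]
  exact le_add_of_nonneg_right (sq_nonneg _)

theorem quantile_average_is_barycenter_general
    (k : ℕ)
    (μ : Fin k → Measure ℝ) (hμ : ∀ s, IsProbabilityMeasure (μ s))
    (hμ2 : ∀ s, MemLp id 2 (μ s))
    (π : Fin k → ℝ) (hπpos : ∀ s, 0 < π s) (hπsum : ∑ s, π s = 1)
    (νbar : Measure ℝ)
    (hνbar : νbar = unif01.map (fun u => ∑ s, π s * quantile' (μ s) u)) :
    ∀ ν : Measure ℝ, IsProbabilityMeasure ν → MemLp id 2 ν →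
      ∑ s, π s * W2sq (μ s) νbar ≤ ∑ s, π s * W2sq (μ s) ν := by
  intro ν hν hν2
  have hq (s : Fin k) : AEMeasurable (quantile' (μ s)) unif01 :=
    (monotoneOn_quantile' (μ s)).aemeasurable_unif01
  have hbar : AEMeasurable (fun u => ∑ s, π s * quantile' (μ s) u) unif01 :=
    Finset.aemeasurable_fun_sum _ fun s _ => (hq s).const_mul (π s)
  calc ∑ s, π s * W2sq (μ s) νbar
      ≤ ∑ s, π s * ∫ u, (quantile' (μ s) u - ∑ j, π j * quantile' (μ j) u) ^ 2 ∂unif01 := by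
        gcongr with s
        · exact (hπpos s).le
        · have h := W2sq_map_le_integral unif01 (hq s) hbar
          rwa [map_quantile'_unif01, ← hνbar] at h
    _ ≤ ∑ s, π s * ∫ u, (quantile' (μ s) u - quantile' ν u) ^ 2 ∂unif01 :=
        sum_mul_integral_sq_sub_weightedMean_le π hπsum (fun s => memLp_quantile' (μ s) (hμ2 s))
          (memLp_quantile' ν hν2)
    _ = ∑ s, π s * W2sq (μ s) ν := by
        simp only [W2sq_eq_integral_sq_sub_quantile' _ ν (hμ2 _) hν2]

/-- **Quantile-average construction of the Wasserstein barycenter.** The pushforward `ν̄`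
of `Unif(0,1)` under `u ↦ Σ_s π_s F_{μ_s}⁻¹(u)` minimizes
`ν ↦ Σ_s π_s W₂²(μ_s, ν)` over probability measures `ν` with finite second moment. -/
theorem quantile_average_is_barycenter
    (k : ℕ) (hk : 0 < k)
    (μ : Fin k → Measure ℝ) (hμ : ∀ s, IsProbabilityMeasure (μ s))
    (hμ2 : ∀ s, MemLp id 2 (μ s))
    (π : Fin k → ℝ) (hπpos : ∀ s, 0 < π s) (hπsum : ∑ s, π s = 1)
    (νbar : Measure ℝ)
    (hνbar : νbar = unif01.map (fun u => ∑ s, π s * quantile' (μ s) u)) :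
    ∀ ν : Measure ℝ, IsProbabilityMeasure ν → MemLp id 2 ν →
      ∑ s, π s * W2sq (μ s) νbar ≤ ∑ s, π s * W2sq (μ s) ν :=
  quantile_average_is_barycenter_general k μ hμ hμ2 π hπpos hπsum νbar hνbar
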